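/- Let n ≥ 2 be an integer and let L be the language recognized by the 1-monster DFA M_{n,{n−1}}, whose alphabet is Σ = (Fin n → Fin n), state set Fin n, initial state 0, unique final state n−1, and transition δ(q, f) = f(q). Then sc(L) = n and the reverse (mirror) language L^R = {a_k⋯a_1 | a_1⋯a_k ∈ L} satisfies sc(L^R) = 2^n. -/

import Mathlib

/-!
A DFA with `m` states has at most `m` left quotients of its language, so a family of `m` words
with pairwise different left quotients shows that `m` states are necessary.

In the monster DFA every state `p` is reached by the constant letter `p`, and two states are
separated by a letter sending one into the final state and the other out of it; so all `n`
states are needed. The reverse language is recognized by the subset construction run backwards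
on `Set (Fin n)`. For a set `S`, the letter `g_S` sending `S` to the final state and its
complement to the initial one gives words `[g_S]` whose left quotients in the reverse language
differ, because `[g_S, const q]` lies in it exactly when `q ∈ S`; so all `2 ^ n` subsets are
needed.
-/

/-- `L` is recognized by some complete DFA with exactly `n` states. -/
def recognizedBy {α : Type} (L : Language α) (n : ℕ) : Prop :=
  ∃ M : DFA α (Fin n), M.accepts = L

/-- The state complexity of a language: the minimal number of states of a
complete DFA recognizing it. -/
noncomputable def sc {α : Type} (L : Language α) : ℕ :=
  sInf {n | recognizedBy L n}

open Function Language

section StateComplexity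

variable {α σ : Type}

lemma recognizedBy_card_of_accepts [Fintype σ] (M : DFA α σ) :
    recognizedBy M.accepts (Fintype.card σ) :=
  ⟨DFA.reindex (Fintype.equivFin σ) M, DFA.accepts_reindex _ _⟩

lemma card_le_of_injective_leftQuotient [Fintype σ] {ι : Type} [Fintype ι] (M : DFA α σ)
    {w : ι → List α} (hw : Injective (M.accepts.leftQuotient ∘ w)) :
    Fintype.card ι ≤ Fintype.card σ := by
  rw [leftQuotient_accepts] at hw
  exact Fintype.card_le_of_injective _ (Injective.of_comp (f := M.acceptsFrom) hw)

lemma sc_eq_card_of_injective_leftQuotient [Fintype σ] {L : Language α} (M : DFA α σ)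
    (hM : M.accepts = L) {w : σ → List α} (hw : Injective (L.leftQuotient ∘ w)) :
    sc L = Fintype.card σ := by
  have hrec : recognizedBy L (Fintype.card σ) := hM ▸ recognizedBy_card_of_accepts M
  refine le_antisymm (Nat.sInf_le hrec) (le_csInf ⟨_, hrec⟩ ?_)
  rintro m ⟨N, rfl⟩
  simpa using card_le_of_injective_leftQuotient N hw

end StateComplexity

namespace DFA

variable {α σ : Type*}

def reverse (M : DFA α σ) : DFA α (Set σ) where
  step S a := (M.step · a) ⁻¹' S
  start := M.accept
  accept := {S | M.start ∈ S}

lemma evalFrom_reverse (M : DFA α σ) (S : Set σ) (w : List α) :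
    M.reverse.evalFrom S w = (M.evalFrom · w.reverse) ⁻¹' S := by
  induction w generalizing S with
  | nil => rfl
  | cons a w ih =>
    rw [evalFrom_cons, ih, List.reverse_cons]
    ext q
    simp only [Set.mem_preimage, evalFrom_append_singleton]
    rfl

lemma accepts_reverse (M : DFA α σ) : M.reverse.accepts = M.accepts.reverse := by
  ext w
  show M.start ∈ M.reverse.evalFrom M.accept w ↔ _
  rw [evalFrom_reverse]
  rfl

end DFA

section Monster

variable {σ : Type}

def monsterDFA (s : σ) (F : Set σ) : DFA (σ → σ) σ := ⟨fun q f => f q, s, F⟩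

lemma pair_mem_monsterDFA_accepts {s : σ} {F : Set σ} (f g : σ → σ) :
    [f, g] ∈ (monsterDFA s F).accepts ↔ g (f s) ∈ F :=
  Iff.rfl

lemma injective_leftQuotient_monsterDFA {s a b : σ} {F : Set σ} (ha : a ∈ F) (hb : b ∉ F) :
    Injective ((monsterDFA s F).accepts.leftQuotient ∘ fun p => [fun _ => p]) := by
  classical
  intro p q hpq
  have hmem : ∀ r, [fun x => if x = p then a else b] ∈
      (monsterDFA s F).accepts.leftQuotient [fun _ => r] ↔ r = p := by
    intro r
    by_cases hr : r = p <;> simp [pair_mem_monsterDFA_accepts, hr, ha, hb]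
  exact ((hmem q).mp (Iff.of_eq (congrArg (_ ∈ ·) hpq) |>.mp ((hmem p).mpr rfl))).symm

open scoped Classical in
lemma injective_leftQuotient_reverse_monsterDFA {s a b : σ} {F : Set σ} (ha : a ∈ F)
    (hb : b ∉ F) :
    Injective ((monsterDFA s F).accepts.reverse.leftQuotient ∘
      fun S : Set σ => [fun r => if r ∈ S then a else b]) := by
  intro S T hST
  have hmem : ∀ (U : Set σ) (q : σ),
      [fun _ => q] ∈ (monsterDFA s F).accepts.reverse.leftQuotient
        [fun r => if r ∈ U then a else b] ↔ q ∈ U := by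
    intro U q
    by_cases hq : q ∈ U <;> simp [mem_reverse, pair_mem_monsterDFA_accepts, hq, ha, hb]
  ext q
  rw [← hmem S, ← hmem T]
  exact Iff.of_eq (congrArg (fun K => [fun _ => q] ∈ K) hST)

end Monster

/-- let `L` be the language of the 1-monster DFA `M_{n,{n-1}}`
(alphabet `Fin n → Fin n`, states `Fin n`, initial state `0`, unique final state `n-1`,
transition `δ(q, f) = f q`). Then `sc L = n` and the reverse language
`L^R = {w | w.reverse ∈ L}` has state complexity `2^n`. -/
theorem stmt13 (n : ℕ) (hn : 2 ≤ n) (L : Language (Fin n → Fin n))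
    (hL : L = (DFA.mk (fun (q : Fin n) (f : Fin n → Fin n) => f q)
        (⟨0, by omega⟩ : Fin n)
        ({(⟨n - 1, by omega⟩ : Fin n)} : Set (Fin n))).accepts) :
    sc L = n ∧ sc {w | w.reverse ∈ L} = 2 ^ n := by
  have ha : (⟨n - 1, by omega⟩ : Fin n) ∈ ({⟨n - 1, by omega⟩} : Set (Fin n)) := rfl
  have hb : (⟨0, by omega⟩ : Fin n) ∉ ({⟨n - 1, by omega⟩} : Set (Fin n)) := by
    simp only [Set.mem_singleton_iff, Fin.mk.injEq]
    omega
  change L = (monsterDFA _ _).accepts at hL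
  subst hL
  constructor
  · simpa using sc_eq_card_of_injective_leftQuotient _ rfl
      (injective_leftQuotient_monsterDFA ha hb)
  · change sc (monsterDFA _ _).accepts.reverse = _
    simpa using sc_eq_card_of_injective_leftQuotient _ (DFA.accepts_reverse _)
      (injective_leftQuotient_reverse_monsterDFA ha hb)
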